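/- Let q ∈ ℂ with 0 < |q| < 1. Then ∑_{j=1}^{∞} ( q^{j^2} / (q;q)_j^2 ) · ∑_{n=1}^{j} q^n / ((1 − q^{n+1})(1 − q^n)) = q^2 / ((1 − q)^2 (q;q)_∞), where the infinite series converges. -/

import Mathlib

/-!
Since `q ^ n / ((1 - q ^ n) * (1 - q ^ (n + 1))) = (1 - q)⁻¹ * (1 / (1 - q ^ n) - 1 / (1 - q ^ (n + 1)))`,
the inner sum telescopes, and the `j`-th summand becomes
`q² / (1 - q)² * q ^ ((j - 1) * (j + 1)) / ((q;q)_{j-1} (q;q)_{j+1})`.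
The series is thus `q² / (1 - q)²` times the Durfee rectangle identity
`∑_d q ^ (d * (d + k)) / ((q;q)_d (q;q)_{d+k}) = 1 / (q;q)_∞` for `k = 2`. That identity is the
limit `N → ∞` (Tannery's theorem) of its finite form
`∑_{a+b=N} q ^ (a * (a + k)) / ((q;q)_a (q;q)_b (q;q)_{a+k}) = 1 / ((q;q)_N (q;q)_{N+k})`,
proved by induction on `N` from `1 - q ^ (a + b) = (1 - q ^ b) + q ^ b * (1 - q ^ a)`.
-/

open Finset

/-- Finite q-Pochhammer symbol `(a;q)_n = ∏_{k=0}^{n-1} (1 - a q^k)`. -/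
noncomputable def qPoch (q a : ℂ) (n : ℕ) : ℂ :=
  ∏ k ∈ Finset.range n, (1 - a * q ^ k)

/-- Infinite q-Pochhammer symbol `(a;q)_∞ = ∏_{k=0}^{∞} (1 - a q^k)`. -/
noncomputable def qPochInf (q a : ℂ) : ℂ :=
  ∏' k : ℕ, (1 - a * q ^ k)

/-- Gaussian (q-binomial) coefficient `[N choose n]_q`. -/
noncomputable def qBinom (q : ℂ) (N n : ℕ) : ℂ :=
  qPoch q q N / (qPoch q q n * qPoch q q (N - n))

open Filter Topology

lemma one_sub_pow_succ_ne_zero {𝕜 : Type*} [NormedDivisionRing 𝕜] {q : 𝕜} (hq : ‖q‖ < 1)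
    (n : ℕ) : 1 - q ^ (n + 1) ≠ 0 := by
  rw [sub_ne_zero]
  intro h
  have := congrArg norm h
  rw [norm_one, norm_pow] at this
  exact (pow_lt_one₀ (norm_nonneg q) hq n.succ_ne_zero).ne this.symm

lemma sum_Icc_pow_div_one_sub_pow_mul {K : Type*} [Field K] {q : K}
    (hq : ∀ n : ℕ, 1 - q ^ (n + 1) ≠ 0) (m : ℕ) :
    ∑ n ∈ Icc 1 m, q ^ n / ((1 - q ^ (n + 1)) * (1 - q ^ n))
      = q * (1 - q ^ m) / ((1 - q) ^ 2 * (1 - q ^ (m + 1))) := by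
  induction m with
  | zero => simp
  | succ m ih =>
    rw [sum_Icc_succ_top (by omega), ih]
    have h1 : 1 - q ≠ 0 := by simpa using hq 0
    have h2 := hq m
    have h3 := hq (m + 1)
    field_simp
    ring

lemma qPoch_succ (q : ℂ) (n : ℕ) : qPoch q q (n + 1) = qPoch q q n * (1 - q ^ (n + 1)) := by
  rw [qPoch, qPoch, prod_range_succ, pow_succ']

lemma qPoch_ne_zero {q : ℂ} (hq : ∀ n : ℕ, 1 - q ^ (n + 1) ≠ 0) (n : ℕ) : qPoch q q n ≠ 0 :=
  prod_ne_zero_iff.2 fun k _ => by rw [← pow_succ']; exact hq k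


noncomputable def durfeeSum (q : ℂ) (k N : ℕ) : ℂ :=
  ∑ p ∈ antidiagonal N,
    q ^ (p.1 * (p.1 + k)) / (qPoch q q p.1 * qPoch q q (p.1 + k)) * (qPoch q q p.2)⁻¹

lemma durfeeSum_succ_mul {q : ℂ} (hq : ∀ n : ℕ, 1 - q ^ (n + 1) ≠ 0) (k N : ℕ) :
    durfeeSum q k (N + 1) * (1 - q ^ (N + 1))
      = durfeeSum q k N + q ^ (N + k + 1) * durfeeSum q (k + 1) N := by
  have hP := qPoch_ne_zero hq
  set T : ℕ × ℕ → ℂ := fun p =>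
    q ^ (p.1 * (p.1 + k)) / (qPoch q q p.1 * qPoch q q (p.1 + k)) * (qPoch q q p.2)⁻¹
  have hsplit : durfeeSum q k (N + 1) * (1 - q ^ (N + 1))
      = ∑ p ∈ antidiagonal (N + 1), T p * (1 - q ^ p.2)
        + ∑ p ∈ antidiagonal (N + 1), T p * (q ^ p.2 * (1 - q ^ p.1)) := by
    rw [durfeeSum, sum_mul, ← sum_add_distrib]
    refine sum_congr rfl fun p hp => ?_
    rw [← mem_antidiagonal.1 hp, pow_add]
    ring
  have hA : ∑ p ∈ antidiagonal (N + 1), T p * (1 - q ^ p.2) = durfeeSum q k N := by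
    rw [Nat.sum_antidiagonal_succ', durfeeSum]
    simp only [T, pow_zero, sub_self, mul_zero, zero_add, qPoch_succ]
    refine sum_congr rfl fun p _ => ?_
    field_simp [hP, hq]
  have hB : ∑ p ∈ antidiagonal (N + 1), T p * (q ^ p.2 * (1 - q ^ p.1))
      = q ^ (N + k + 1) * durfeeSum q (k + 1) N := by
    rw [Nat.sum_antidiagonal_succ, durfeeSum, mul_sum]
    simp only [T, pow_zero, sub_self, mul_zero, zero_add, qPoch_succ]
    refine sum_congr rfl fun ⟨a, b⟩ hab => ?_
    obtain rfl : N = a + b := (mem_antidiagonal.1 hab).symm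
    rw [show a + 1 + k = a + (k + 1) by ring]
    field_simp [hP, hq]
    rw [← pow_add, ← pow_add]
    ring_nf
  rw [hsplit, hA, hB]

lemma durfeeSum_eq {q : ℂ} (hq : ∀ n : ℕ, 1 - q ^ (n + 1) ≠ 0) (k N : ℕ) :
    durfeeSum q k N = 1 / (qPoch q q N * qPoch q q (N + k)) := by
  induction N generalizing k with
  | zero => simp [durfeeSum, qPoch]
  | succ N ih =>
    have hP := qPoch_ne_zero hq
    rw [eq_div_of_mul_eq (hq N) (durfeeSum_succ_mul hq k N), ih, ih,
      show N + 1 + k = N + k + 1 by ring, show N + (k + 1) = N + k + 1 by ring,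
      qPoch_succ, qPoch_succ]
    field_simp [hP, hq]
    ring

lemma summable_norm_neg_mul_pow {q : ℂ} (hq : ‖q‖ < 1) :
    Summable fun n : ℕ => ‖-(q * q ^ n)‖ := by
  simpa using (summable_geometric_of_lt_one (norm_nonneg q) hq).mul_left ‖q‖

lemma tendsto_qPoch {q : ℂ} (hq : ‖q‖ < 1) :
    Tendsto (qPoch q q) atTop (𝓝 (qPochInf q q)) := by
  have := (multipliable_one_add_of_summable (summable_norm_neg_mul_pow hq)).hasProd
  simp only [← sub_eq_add_neg] at this
  exact this.tendsto_prod_nat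

lemma qPochInf_ne_zero {q : ℂ} (hq : ‖q‖ < 1) : qPochInf q q ≠ 0 := by
  have hfac (n : ℕ) : 1 + -(q * q ^ n) ≠ 0 := by
    rw [← sub_eq_add_neg, ← pow_succ']
    exact one_sub_pow_succ_ne_zero hq n
  have := tprod_one_add_ne_zero_of_summable hfac (summable_norm_neg_mul_pow hq)
  simp only [← sub_eq_add_neg] at this
  exact this

lemma exists_norm_inv_qPoch_le {q : ℂ} (hq : ‖q‖ < 1) : ∃ M, ∀ n, ‖(qPoch q q n)⁻¹‖ ≤ M := by
  obtain ⟨M, hM⟩ := ((tendsto_qPoch hq).inv₀ (qPochInf_ne_zero hq)).norm.bddAbove_range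
  exact ⟨M, fun n => hM ⟨n, rfl⟩⟩

lemma tendsto_sum_antidiagonal_mul {R : Type*} [NormedRing R] [CompleteSpace R] {a b : ℕ → R}
    {β : R} (ha : Summable fun n => ‖a n‖) (hb : Tendsto b atTop (𝓝 β)) :
    Tendsto (fun N => ∑ p ∈ antidiagonal N, a p.1 * b p.2) atTop (𝓝 ((∑' n, a n) * β)) := by
  obtain ⟨M, hM⟩ := hb.norm.bddAbove_range
  let f : ℕ → ℕ → R := fun N d => if d ≤ N then a d * b (N - d) else 0
  have hf_tsum (N : ℕ) : ∑' d, f N d = ∑ p ∈ antidiagonal N, a p.1 * b p.2 := by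
    rw [Nat.sum_antidiagonal_eq_sum_range_succ_mk, tsum_eq_sum (s := range (N + 1))]
    · exact sum_congr rfl fun d hd => if_pos (Nat.lt_succ_iff.1 (mem_range.1 hd))
    · exact fun d hd => if_neg (by simpa [Nat.lt_succ_iff] using hd)
  have hf_lim (d : ℕ) : Tendsto (f · d) atTop (𝓝 (a d * β)) :=
    ((hb.comp (tendsto_sub_atTop_nat d)).const_mul (a d)).congr'
      ((eventually_ge_atTop d).mono fun N hN => (if_pos hN).symm)
  have hf_le (N d : ℕ) : ‖f N d‖ ≤ ‖a d‖ * M := by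
    by_cases hd : d ≤ N
    · simp only [f, if_pos hd]
      exact (norm_mul_le _ _).trans (by gcongr; exact hM ⟨N - d, rfl⟩)
    · simp only [f, if_neg hd, norm_zero]
      exact mul_nonneg (norm_nonneg _) ((norm_nonneg _).trans (hM ⟨0, rfl⟩))
  have := tendsto_tsum_of_dominated_convergence (ha.mul_right M) hf_lim (.of_forall hf_le)
  rwa [funext hf_tsum, ha.of_norm.tsum_mul_right] at this

theorem hasSum_durfee {q : ℂ} (hq : ‖q‖ < 1) (k : ℕ) :
    HasSum (fun d : ℕ => q ^ (d * (d + k)) / (qPoch q q d * qPoch q q (d + k)))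
      (qPochInf q q)⁻¹ := by
  have hPinf := qPochInf_ne_zero hq
  obtain ⟨M, hM⟩ := exists_norm_inv_qPoch_le hq
  have hsum : Summable fun d : ℕ => ‖q ^ (d * (d + k)) / (qPoch q q d * qPoch q q (d + k))‖ := by
    refine ((summable_geometric_of_lt_one (norm_nonneg q) hq).mul_right (M * M)).of_nonneg_of_le
      (fun _ => norm_nonneg _) fun d => ?_
    rw [div_eq_mul_inv, mul_inv, ← mul_assoc, norm_mul, norm_mul, norm_pow, mul_assoc]
    have hd : d ≤ d * (d + k) := (Nat.le_mul_self d).trans (Nat.mul_le_mul_left d (by omega))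
    have hM0 : 0 ≤ M := (norm_nonneg _).trans (hM 0)
    exact mul_le_mul (pow_le_pow_of_le_one (norm_nonneg q) hq.le hd)
      (mul_le_mul (hM d) (hM (d + k)) (norm_nonneg _) hM0) (by positivity) (by positivity)
  have hlim := (tendsto_sum_antidiagonal_mul hsum ((tendsto_qPoch hq).inv₀ hPinf)).congr
    fun N => durfeeSum_eq (one_sub_pow_succ_ne_zero hq) k N
  have hlim' : Tendsto (fun N => 1 / (qPoch q q N * qPoch q q (N + k))) atTop
      (𝓝 (1 / (qPochInf q q * qPochInf q q))) :=
    tendsto_const_nhds.div ((tendsto_qPoch hq).mul ((tendsto_qPoch hq).comp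
      (tendsto_add_atTop_nat k))) (mul_ne_zero hPinf hPinf)
  have hval := tendsto_nhds_unique hlim hlim'
  rw [hsum.of_norm.hasSum_iff]
  field_simp at hval ⊢
  exact hval

lemma pow_sq_div_qPoch_sq_mul_sum_Icc {q : ℂ} (hq : ∀ n : ℕ, 1 - q ^ (n + 1) ≠ 0) (j : ℕ) :
    q ^ ((j + 1) ^ 2) / (qPoch q q (j + 1)) ^ 2 *
        ∑ n ∈ Icc 1 (j + 1), q ^ n / ((1 - q ^ (n + 1)) * (1 - q ^ n))
      = q ^ 2 / (1 - q) ^ 2 * (q ^ (j * (j + 2)) / (qPoch q q j * qPoch q q (j + 2))) := by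
  have h1 : 1 - q ≠ 0 := by simpa using hq 0
  have hP := qPoch_ne_zero hq j
  have h2 := hq j
  have h3 := hq (j + 1)
  rw [sum_Icc_pow_div_one_sub_pow_mul hq, qPoch_succ, qPoch_succ, qPoch_succ,
    show (j + 1) ^ 2 = j * (j + 2) + 1 by ring]
  field_simp
  ring

theorem stmt_19_general (q : ℂ) (hq : ‖q‖ < 1) :
    Summable (fun j : ℕ =>
        q ^ ((j + 1) ^ 2) / (qPoch q q (j + 1)) ^ 2 *
          ∑ n ∈ Finset.Icc 1 (j + 1), q ^ n / ((1 - q ^ (n + 1)) * (1 - q ^ n))) ∧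
    ∑' j : ℕ,
        q ^ ((j + 1) ^ 2) / (qPoch q q (j + 1)) ^ 2 *
          ∑ n ∈ Finset.Icc 1 (j + 1), q ^ n / ((1 - q ^ (n + 1)) * (1 - q ^ n))
      = q ^ 2 / ((1 - q) ^ 2 * qPochInf q q) := by
  have h := (hasSum_durfee hq 2).mul_left (q ^ 2 / (1 - q) ^ 2)
  simp_rw [← pow_sq_div_qPoch_sq_mul_sum_Icc (one_sub_pow_succ_ne_zero hq)] at h
  exact ⟨h.summable, h.tsum_eq.trans (by rw [← div_eq_mul_inv, div_div])⟩

theorem stmt_19 (q : ℂ) (hq0 : 0 < ‖q‖) (hq : ‖q‖ < 1) :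
    Summable (fun j : ℕ =>
        q ^ ((j + 1) ^ 2) / (qPoch q q (j + 1)) ^ 2 *
          ∑ n ∈ Finset.Icc 1 (j + 1), q ^ n / ((1 - q ^ (n + 1)) * (1 - q ^ n))) ∧
    ∑' j : ℕ,
        q ^ ((j + 1) ^ 2) / (qPoch q q (j + 1)) ^ 2 *
          ∑ n ∈ Finset.Icc 1 (j + 1), q ^ n / ((1 - q ^ (n + 1)) * (1 - q ^ n))
      = q ^ 2 / ((1 - q) ^ 2 * qPochInf q q) :=
  stmt_19_general q hq
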